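/- (Lyapunov inequality underlying Theorem 4.6, Case (L3)) Let Q^{(m+1)} be a conservative Q-matrix on S and suppose Q(x) = Q^{(m+1)} for every x with |x| ≥ α_m, where α_m > 0. Suppose ρ : ℝ^d → (0,∞) is twice continuously differentiable and there exist r0 > 0 and β ∈ ℝ^N with ℒ^{(i)}ρ(x) ≤ β_i ρ(x) for all |x| > r0 and i ∈ S. Suppose there exist p ∈ (0,1], η > 0 and ξ ∈ ℝ^N with ξ_i > 0 for all i such that (Q^{(m+1)} + p·diag(β))ξ = −η ξ. Then, with r1 = max(r0, α_m), the function V(x,i) = ξ_i ρ(x)^p satisfies 𝒜V(x,i) ≤ −η V(x,i) < 0 for all |x| > r1 and all i ∈ S. -/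

import Mathlib

/-! By the second-order chain rule,
`ℒ⁽ⁱ⁾(ρ ^ p) = p ρ ^ (p - 1) ℒ⁽ⁱ⁾ρ + ½ p (p - 1) ρ ^ (p - 2) ⟨∇ρ, a ∇ρ⟩`,
and the second term is nonpositive because `a` is positive semidefinite and `t ↦ t ^ p` is
concave for `p ≤ 1`; hence `ℒ⁽ⁱ⁾(ρ ^ p) ≤ p βᵢ ρ ^ p` for `|x| > r0`. For `|x| ≥ αₘ` the
switching part of `𝒜V(x, i)` is `(Q⁽ᵐ⁺¹⁾ ξ)ᵢ ρ ^ p`, since the rows of `Q⁽ᵐ⁺¹⁾` sum to zero, and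
the eigenvector relation `(Q⁽ᵐ⁺¹⁾ + p diag β) ξ = -η ξ` collapses the sum to `-η ξᵢ ρ ^ p`. -/

open scoped BigOperators

/-- The diffusion generator `ℒ^{(i)}f(x) = ⟨b(x,i), ∇f(x)⟩ + (1/2) tr(a(x,i) ∇²f(x))`
in a fixed environment, expressed via Fréchet derivatives on Euclidean space. -/
noncomputable def diffGen {d : ℕ}
    (b : EuclideanSpace ℝ (Fin d) → EuclideanSpace ℝ (Fin d))
    (a : EuclideanSpace ℝ (Fin d) → Matrix (Fin d) (Fin d) ℝ)
    (f : EuclideanSpace ℝ (Fin d) → ℝ) (x : EuclideanSpace ℝ (Fin d)) : ℝ :=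
  fderiv ℝ f x (b x) +
    (1 / 2) * ∑ k, ∑ l, a x k l *
      fderiv ℝ (fun y => fderiv ℝ f y (EuclideanSpace.single l 1)) x
        (EuclideanSpace.single k 1)

/-- The full generator of the regime-switching diffusion:
`𝒜V(x,i) = ℒ^{(i)}V(·,i)(x) + Σ_{j≠i} q_{ij}(x)(V(x,j) − V(x,i))`. -/
noncomputable def hybridGen {N d : ℕ}
    (b : EuclideanSpace ℝ (Fin d) → Fin N → EuclideanSpace ℝ (Fin d))
    (a : EuclideanSpace ℝ (Fin d) → Fin N → Matrix (Fin d) (Fin d) ℝ)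
    (Q : EuclideanSpace ℝ (Fin d) → Matrix (Fin N) (Fin N) ℝ)
    (V : EuclideanSpace ℝ (Fin d) → Fin N → ℝ)
    (x : EuclideanSpace ℝ (Fin d)) (i : Fin N) : ℝ :=
  diffGen (fun y => b y i) (fun y => a y i) (fun y => V y i) x +
    ∑ j ∈ Finset.univ.erase i, Q x i j * (V x j - V x i)

open scoped Matrix

section DiffGen

variable {d : ℕ} (b : EuclideanSpace ℝ (Fin d) → EuclideanSpace ℝ (Fin d))
  (a : EuclideanSpace ℝ (Fin d) → Matrix (Fin d) (Fin d) ℝ)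

theorem diffGen_const_mul (f : EuclideanSpace ℝ (Fin d) → ℝ) (c : ℝ)
    (x : EuclideanSpace ℝ (Fin d)) :
    diffGen b a (fun y => c * f y) x = c * diffGen b a f x := by
  have hD : ∀ g : EuclideanSpace ℝ (Fin d) → ℝ,
      fderiv ℝ (fun y => c * g y) = c • fderiv ℝ g := fun g => fderiv_const_smul_field (f := g) c
  simp only [diffGen, hD, Pi.smul_apply, smul_apply, smul_eq_mul, mul_left_comm _ c,
    ← Finset.mul_sum]
  ring

theorem diffGen_comp {f : EuclideanSpace ℝ (Fin d) → ℝ} (hf : ContDiff ℝ 2 f)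
    {φ φ' φ'' : ℝ → ℝ} (hφ : ∀ y, HasDerivAt φ (φ' (f y)) (f y)) {x : EuclideanSpace ℝ (Fin d)}
    (hφ' : HasDerivAt φ' (φ'' (f x)) (f x)) :
    let g := fun k => fderiv ℝ f x (EuclideanSpace.single k 1)
    diffGen b a (fun y => φ (f y)) x =
      φ' (f x) * diffGen b a f x + 1 / 2 * φ'' (f x) * (g ⬝ᵥ a x *ᵥ g) := by
  intro g
  have hf1 : Differentiable ℝ f := hf.differentiable (by norm_num)
  have hD : ∀ y, fderiv ℝ (fun y => φ (f y)) y = φ' (f y) • fderiv ℝ f y := fun y =>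
    ((hφ y).comp_hasFDerivAt y (hf1 y).hasFDerivAt).fderiv
  have hD1 : ∀ l, (fun y => fderiv ℝ (fun z => φ (f z)) y (EuclideanSpace.single l 1)) =
      fun y => φ' (f y) * fderiv ℝ f y (EuclideanSpace.single l 1) := by
    intro l; funext y; simp [hD]
  have hD2 : ∀ l, fderiv ℝ (fun y => φ' (f y) * fderiv ℝ f y (EuclideanSpace.single l 1)) x =
      φ' (f x) • fderiv ℝ (fun y => fderiv ℝ f y (EuclideanSpace.single l 1)) x +
        fderiv ℝ f x (EuclideanSpace.single l 1) • φ'' (f x) • fderiv ℝ f x := by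
    intro l
    have hdir : DifferentiableAt ℝ (fun y => fderiv ℝ f y (EuclideanSpace.single l 1)) x :=
      ((hf.fderiv_right (m := 1) (by norm_num)).clm_apply contDiff_const).differentiable
        (by norm_num) x
    exact ((hφ'.comp_hasFDerivAt x (hf1 x).hasFDerivAt).mul hdir.hasFDerivAt).fderiv
  unfold diffGen
  rw [hD x]
  simp only [hD1, hD2, add_apply, smul_apply, smul_eq_mul, dotProduct, Matrix.mulVec, g]
  rw [mul_add, add_assoc]
  congr 1
  simp only [Finset.mul_sum, ← Finset.sum_add_distrib]
  exact Finset.sum_congr rfl fun k _ => Finset.sum_congr rfl fun l _ => by ring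

theorem diffGen_rpow_le {ρ : EuclideanSpace ℝ (Fin d) → ℝ} (hρpos : ∀ x, 0 < ρ x)
    (hρ : ContDiff ℝ 2 ρ) {p : ℝ} (hp0 : 0 ≤ p) (hp1 : p ≤ 1) {x : EuclideanSpace ℝ (Fin d)}
    (ha : (a x).PosSemidef) {c : ℝ} (hL : diffGen b a ρ x ≤ c * ρ x) :
    diffGen b a (fun y => ρ y ^ p) x ≤ p * c * ρ x ^ p := by
  have hρx := hρpos x
  rw [diffGen_comp b a hρ (φ := fun t => t ^ p) (φ'' := fun t => p * ((p - 1) * t ^ (p - 1 - 1)))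
    (fun y => Real.hasDerivAt_rpow_const (Or.inl (hρpos y).ne'))
    ((Real.hasDerivAt_rpow_const (p := p - 1) (Or.inl hρx.ne')).const_mul p)]
  set g := fun k => fderiv ℝ ρ x (EuclideanSpace.single k 1)
  have hdrift : p * ρ x ^ (p - 1) * diffGen b a ρ x ≤ p * c * ρ x ^ p :=
    calc p * ρ x ^ (p - 1) * diffGen b a ρ x ≤ p * ρ x ^ (p - 1) * (c * ρ x) := by gcongr
      _ = p * c * ρ x ^ p := by rw [Real.rpow_sub_one hρx.ne']; field_simp
  have hcurv : p * ((p - 1) * ρ x ^ (p - 1 - 1)) ≤ 0 :=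
    mul_nonpos_of_nonneg_of_nonpos hp0
      (mul_nonpos_of_nonpos_of_nonneg (by linarith) (by positivity))
  have hquad : 0 ≤ g ⬝ᵥ a x *ᵥ g := by simpa using ha.dotProduct_mulVec_nonneg g
  linarith [mul_nonpos_of_nonpos_of_nonneg hcurv hquad]

end DiffGen

theorem sum_erase_mul_sub_eq_mulVec {n R : Type*} [Fintype n] [DecidableEq n] [CommRing R]
    (Q : Matrix n n R) (v : n → R) {i : n} (hQ : ∑ j, Q i j = 0) :
    ∑ j ∈ Finset.univ.erase i, Q i j * (v j - v i) = (Q *ᵥ v) i := by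
  rw [Finset.sum_erase _ (by simp)]
  simp [mul_sub, Finset.sum_sub_distrib, ← Finset.sum_mul, hQ, Matrix.mulVec, dotProduct]

theorem hybridGen_const_mul {N d : ℕ}
    (b : EuclideanSpace ℝ (Fin d) → Fin N → EuclideanSpace ℝ (Fin d))
    (a : EuclideanSpace ℝ (Fin d) → Fin N → Matrix (Fin d) (Fin d) ℝ)
    (Q : EuclideanSpace ℝ (Fin d) → Matrix (Fin N) (Fin N) ℝ) (ξ : Fin N → ℝ)
    (f : EuclideanSpace ℝ (Fin d) → ℝ) {x : EuclideanSpace ℝ (Fin d)} {i : Fin N}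
    (hQ : ∑ j, Q x i j = 0) :
    hybridGen b a Q (fun y j => ξ j * f y) x i =
      ξ i * diffGen (fun y => b y i) (fun y => a y i) f x + (Q x *ᵥ ξ) i * f x := by
  rw [hybridGen, diffGen_const_mul, ← sum_erase_mul_sub_eq_mulVec _ _ hQ, Finset.sum_mul]
  congr 1
  exact Finset.sum_congr rfl fun j _ => by ring

theorem lyapunov_ergodicity_L3_general
    (N d : ℕ)
    (b : EuclideanSpace ℝ (Fin d) → Fin N → EuclideanSpace ℝ (Fin d))
    (a : EuclideanSpace ℝ (Fin d) → Fin N → Matrix (Fin d) (Fin d) ℝ)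
    (ha : ∀ x i, (a x i).PosSemidef)
    (Q : EuclideanSpace ℝ (Fin d) → Matrix (Fin N) (Fin N) ℝ)
    (Qm : Matrix (Fin N) (Fin N) ℝ)
    (hQmrow : ∀ i, ∑ j, Qm i j = 0)
    (αm : ℝ)
    (hQeq : ∀ x : EuclideanSpace ℝ (Fin d), αm ≤ ‖x‖ → Q x = Qm)
    (ρ : EuclideanSpace ℝ (Fin d) → ℝ)
    (hρpos : ∀ x, 0 < ρ x)
    (hρC2 : ContDiff ℝ 2 ρ)
    (r0 : ℝ)
    (β : Fin N → ℝ)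
    (hL : ∀ x : EuclideanSpace ℝ (Fin d), r0 < ‖x‖ → ∀ i,
      diffGen (fun y => b y i) (fun y => a y i) ρ x ≤ β i * ρ x)
    (p : ℝ) (hp0 : 0 < p) (hp1 : p ≤ 1)
    (η : ℝ) (hη : 0 < η)
    (ξ : Fin N → ℝ) (hξ : ∀ i, 0 < ξ i)
    (heig : ∀ i, (Qm + p • Matrix.diagonal β).mulVec ξ i = -η * ξ i) :
    ∀ x : EuclideanSpace ℝ (Fin d), max r0 αm < ‖x‖ → ∀ i,
      hybridGen b a Q (fun y j => ξ j * ρ y ^ p) x i ≤ -η * (ξ i * ρ x ^ p) ∧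
      -η * (ξ i * ρ x ^ p) < 0 := by
  intro x hx i
  have hQx : Q x = Qm := hQeq x ((le_max_right _ _).trans hx.le)
  have hdiff := diffGen_rpow_le _ _ hρpos hρC2 hp0.le hp1 (ha x i)
    (hL x ((le_max_left _ _).trans_lt hx) i)
  have hQξ : (Qm *ᵥ ξ) i = -η * ξ i - p * β i * ξ i := by
    have h := heig i
    simp only [Matrix.add_mulVec, Matrix.smul_mulVec, Matrix.mulVec_diagonal, Pi.add_apply,
      Pi.smul_apply, smul_eq_mul] at h
    linarith
  rw [hybridGen_const_mul _ _ _ _ _ (by rw [hQx]; exact hQmrow i), hQx, hQξ]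
  refine ⟨?_, mul_neg_of_neg_of_pos (neg_neg_of_pos hη) 
    (mul_pos (hξ i) (Real.rpow_pos_of_pos (hρpos x) p))⟩
  linarith [mul_le_mul_of_nonneg_left hdiff (hξ i).le]

/-- (Lyapunov inequality underlying Theorem 4.6, Case (L3)): with
`Q(x) = Q^{(m+1)}` for `|x| ≥ α_m`, `ℒ^{(i)}ρ ≤ β_i ρ` for `|x| > r0`, and
`(Q^{(m+1)} + p·diag β)ξ = −η ξ` with `ξ ≫ 0`, `p ∈ (0,1]`, `η > 0`, the
function `V(x,i) = ξ_i ρ(x)^p` satisfies `𝒜V(x,i) ≤ −η V(x,i) < 0` for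
`|x| > r1 = max(r0, α_m)`. -/
theorem lyapunov_ergodicity_L3
    (N d : ℕ) (hN : 1 ≤ N) (hd : 1 ≤ d)
    (b : EuclideanSpace ℝ (Fin d) → Fin N → EuclideanSpace ℝ (Fin d))
    (a : EuclideanSpace ℝ (Fin d) → Fin N → Matrix (Fin d) (Fin d) ℝ)
    (ha : ∀ x i, (a x i).PosSemidef)
    (Q : EuclideanSpace ℝ (Fin d) → Matrix (Fin N) (Fin N) ℝ)
    (hQoff : ∀ x i j, i ≠ j → 0 ≤ Q x i j)
    (hQrow : ∀ x i, ∑ j, Q x i j = 0)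
    (Qm : Matrix (Fin N) (Fin N) ℝ)
    (hQmoff : ∀ i j, i ≠ j → 0 ≤ Qm i j)
    (hQmrow : ∀ i, ∑ j, Qm i j = 0)
    (αm : ℝ) (hαm : 0 < αm)
    (hQeq : ∀ x : EuclideanSpace ℝ (Fin d), αm ≤ ‖x‖ → Q x = Qm)
    (ρ : EuclideanSpace ℝ (Fin d) → ℝ)
    (hρpos : ∀ x, 0 < ρ x)
    (hρC2 : ContDiff ℝ 2 ρ)
    (r0 : ℝ) (hr0 : 0 < r0)
    (β : Fin N → ℝ)
    (hL : ∀ x : EuclideanSpace ℝ (Fin d), r0 < ‖x‖ → ∀ i,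
      diffGen (fun y => b y i) (fun y => a y i) ρ x ≤ β i * ρ x)
    (p : ℝ) (hp0 : 0 < p) (hp1 : p ≤ 1)
    (η : ℝ) (hη : 0 < η)
    (ξ : Fin N → ℝ) (hξ : ∀ i, 0 < ξ i)
    (heig : ∀ i, (Qm + p • Matrix.diagonal β).mulVec ξ i = -η * ξ i) :
    ∀ x : EuclideanSpace ℝ (Fin d), max r0 αm < ‖x‖ → ∀ i,
      hybridGen b a Q (fun y j => ξ j * ρ y ^ p) x i ≤ -η * (ξ i * ρ x ^ p) ∧
      -η * (ξ i * ρ x ^ p) < 0 :=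
  lyapunov_ergodicity_L3_general N d b a ha Q Qm hQmrow αm hQeq ρ hρpos hρC2 r0 β hL p hp0 hp1 η hη
    ξ hξ heig
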